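/- arXiv:1609.00396 — 3 statements merged into one kernel-verified Lean document; each statement's English description precedes it below -/
import Mathlib

section
/- The matrices M_a = [[1,2],[0,1]] and M_b = [[1,0],[2,1]] in SL(2,ℤ) generate a free group of rank 2; equivalently, no nontrivial reduced word in M_a, M_b and their inverses equals the identity matrix. -/
/-!
`Ma` and `Mb` are the transvections `e₀₁(2)` and `e₁₀(2)`, so their nonzero powers are `e₀₁(2n)`
and `e₁₀(2n)` with `|2n| ≥ 2`. A transvection `e_ij(b)` with `|b| ≥ 2` maps every vector whose
`j`-th coordinate strictly dominates in absolute value to one whose `i`-th coordinate does, since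
`|v i + b v j| ≥ 2|v j| - |v i| > |v j|`. Ping-pong on these two disjoint sets of vectors in `ℤ²`
then shows that no nontrivial reduced word acts trivially.
-/

/-- The matrix [[1,2],[0,1]] as an element of SL(2,ℤ). -/
def Ma : Matrix.SpecialLinearGroup (Fin 2) ℤ :=
  ⟨!![1, 2; 0, 1], by simp [Matrix.det_fin_two_of]⟩

/-- The matrix [[1,0],[2,1]] as an element of SL(2,ℤ). -/
def Mb : Matrix.SpecialLinearGroup (Fin 2) ℤ :=
  ⟨!![1, 0; 2, 1], by simp [Matrix.det_fin_two_of]⟩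

open Function Pointwise

theorem FreeGroup.injective_lift_of_ping_pong_zpow {ι G α : Type*} [Nontrivial ι] [Group G]
    [MulAction G α] (a : ι → G) (X : ι → Set α) (hX : ∀ i, (X i).Nonempty)
    (hXdisj : Pairwise (Disjoint on X))
    (hpp : Pairwise fun i j => ∀ n : ℤ, n ≠ 0 → a i ^ n • X j ⊆ X i) :
    Injective (FreeGroup.lift a) := by
  have hlift : FreeGroup.lift a =
      (Monoid.CoprodI.lift fun i => FreeGroup.lift fun _ => a i).comp
        freeGroupEquivCoprodI.toMonoidHom := by
    ext i; simp
  rw [hlift, MonoidHom.coe_comp]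
  refine Injective.comp ?_ freeGroupEquivCoprodI.injective
  have hcard : ∃ _ : ι, 3 ≤ Cardinal.mk (FreeGroup Unit) :=
    ⟨Classical.arbitrary ι, Cardinal.natCast_lt_aleph0.le.trans (Cardinal.aleph0_le_mk _)⟩
  refine Monoid.CoprodI.lift_injective_of_ping_pong _ (.inr hcard) X hX hXdisj ?_
  intro i j hij h hh
  obtain ⟨n, rfl⟩ : ∃ n : ℤ, FreeGroup.of () ^ n = h :=
    FreeGroup.freeGroupUnitEquivInt.symm.surjective h
  have hn : n ≠ 0 := by rintro rfl; exact hh (zpow_zero _)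
  simpa using hpp hij n hn

namespace Matrix.SpecialLinearGroup

variable {ι F : Type*} [DecidableEq ι] [Fintype ι] [CommRing F]

lemma transvection_smul {i j : ι} (hij : i ≠ j) (b : F) (v : ι → F) :
    transvection hij b • v = v + Pi.single i (b * v j) := by
  rw [SpecialLinearGroup.smul_def, transvection_coe, add_smul, one_smul, smul_eq_mulVec,
    single_mulVec]
  rfl

lemma transvection_zpow {i j : ι} (hij : i ≠ j) (b : F) (n : ℤ) :
    transvection hij b ^ n = transvection hij (n • b) :=
  (map_zpow (MonoidHom.mk' (fun c : Multiplicative F => transvection hij c.toAdd)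
    (fun _ _ => transvection_add hij _ _)) (.ofAdd b) n).symm

end Matrix.SpecialLinearGroup

section DominantCoord

variable {ι F : Type*} [CommRing F] [LinearOrder F]

def dominantCoord (i : ι) : Set (ι → F) := {v | ∀ k ≠ i, |v k| < |v i|}

lemma pairwise_disjoint_dominantCoord : Pairwise (Disjoint on dominantCoord (ι := ι) (F := F)) :=
  fun i j hij => Set.disjoint_left.2 fun _ hi hj => (hi j hij.symm).not_gt (hj i hij)

variable [IsStrictOrderedRing F]

lemma single_one_mem_dominantCoord [DecidableEq ι] (i : ι) :
    Pi.single i 1 ∈ dominantCoord (F := F) i := by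
  intro k hk
  simp [hk]

open Matrix.SpecialLinearGroup in
lemma transvection_smul_mem_dominantCoord [DecidableEq ι] [Fintype ι] {i j : ι} (hij : i ≠ j)
    {b : F} (hb : 2 ≤ |b|) {v : ι → F} (hv : v ∈ dominantCoord j) :
    transvection hij b • v ∈ dominantCoord i := by
  have hvj : |v j| < |v i + b * v j| := by
    have hvi := hv i hij
    calc |v j| = 2 * |v j| - |v j| := by ring
      _ < |b| * |v j| - |v i| := by nlinarith [abs_nonneg (v j)]
      _ = |b * v j| - |v i| := by rw [abs_mul]
      _ ≤ |v i + b * v j| := by simpa [add_comm] using abs_sub_abs_le_abs_add (b * v j) (v i)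
  intro k hk
  rw [transvection_smul, Pi.add_apply, Pi.add_apply, Pi.single_eq_same, Pi.single_eq_of_ne hk,
    add_zero]
  rcases eq_or_ne k j with rfl | hkj
  · exact hvj
  · exact (hv k hkj).trans hvj

end DominantCoord

open Matrix.SpecialLinearGroup

lemma Ma_Mb_eq_transvection {i j : Fin 2} (hij : i ≠ j) : ![Ma, Mb] i = transvection hij 2 := by
  fin_cases i <;> fin_cases j
  all_goals first
    | exact absurd rfl hij
    | ext k l; fin_cases k <;> fin_cases l <;> simp [Ma, Mb, transvection_coe]

/-- M_a and M_b generate a free group of rank 2: the evaluation homomorphism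
from the free group on two generators is injective. -/
theorem Ma_Mb_generate_free_group :
    Function.Injective ⇑(FreeGroup.lift (![Ma, Mb] : Fin 2 → Matrix.SpecialLinearGroup (Fin 2) ℤ)) := by
  refine FreeGroup.injective_lift_of_ping_pong_zpow _ (dominantCoord (F := ℤ))
    (fun i => ⟨_, single_one_mem_dominantCoord i⟩) pairwise_disjoint_dominantCoord ?_
  intro i j hij n hn
  have h2n : 2 ≤ |n • (2 : ℤ)| := by
    rw [smul_eq_mul, abs_mul]
    have := Int.one_le_abs hn
    simp only [Nat.abs_ofNat]
    omega
  rw [Ma_Mb_eq_transvection hij, transvection_zpow]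
  rintro _ ⟨v, hv, rfl⟩
  exact transvection_smul_mem_dominantCoord hij h2n hv
end

section
/- Let A₁ = [[2,0],[1,1/2]], A₂ = [[2,0],[0,1/2]], A₃ = [[1,0],[-1,1]], A₄ = [[1/2,0],[0,2]] be rational 2×2 matrices of determinant 1. For natural numbers x, y, z, the product A₁ · A₂^x · A₃^y · A₄^z equals the identity matrix if and only if y = 2^{2x+1} and z = x+1. -/
lemma pow_diag (a b : ℚ) (n : ℕ) :
    (!![a, 0; 0, b] : Matrix (Fin 2) (Fin 2) ℚ) ^ n = !![a ^ n, 0; 0, b ^ n] := by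
  induction n with
  | zero => simp [Matrix.one_fin_two]
  | succ n ih =>
      rw [pow_succ, pow_succ, pow_succ, ih]
      ext i j
      fin_cases i <;> fin_cases j <;>
        simp [Matrix.mul_apply, Fin.sum_univ_two]

lemma pow_lower (n : ℕ) :
    (!![1, 0; -1, 1] : Matrix (Fin 2) (Fin 2) ℚ) ^ n = !![1, 0; -(n : ℚ), 1] := by
  induction n with
  | zero => simp [Matrix.one_fin_two]
  | succ n ih =>
      rw [pow_succ, ih]
      ext i j
      fin_cases i <;> fin_cases j <;>
        (simp [Matrix.mul_apply, Fin.sum_univ_two]; try ring)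

lemma qpow_inj {a b : ℕ} (h : (2 : ℚ) ^ a = (2 : ℚ) ^ b) : a = b := by
  have : ((2 ^ a : ℕ) : ℚ) = ((2 ^ b : ℕ) : ℚ) := by push_cast; exact h
  exact Nat.pow_right_injective (le_refl 2) (Nat.cast_injective this)

lemma half_pow (n : ℕ) : (1/2 : ℚ) ^ n * 2 ^ n = 1 := by
  rw [← mul_pow]; norm_num

/-- For A₁ = [[2,0],[1,1/2]], A₂ = [[2,0],[0,1/2]], A₃ = [[1,0],[-1,1]],
A₄ = [[1/2,0],[0,2]] over ℚ: A₁·A₂^x·A₃^y·A₄^z = I iff y = 2^{2x+1} and z = x+1. -/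
theorem upowodd_register
    (A₁ A₂ A₃ A₄ : Matrix (Fin 2) (Fin 2) ℚ)
    (h₁ : A₁ = !![2, 0; 1, 1/2]) (h₂ : A₂ = !![2, 0; 0, 1/2])
    (h₃ : A₃ = !![1, 0; -1, 1]) (h₄ : A₄ = !![1/2, 0; 0, 2])
    (x y z : ℕ) :
    A₁ * A₂ ^ x * A₃ ^ y * A₄ ^ z = 1 ↔ y = 2 ^ (2 * x + 1) ∧ z = x + 1 := by
  subst h₁ h₂ h₃ h₄
  rw [pow_diag, pow_diag, pow_lower]
  have hx2 : (2:ℚ)^x ≠ 0 := by positivity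
  have hprod :
      (!![2, 0; 1, 1/2] : Matrix (Fin 2) (Fin 2) ℚ) * !![(2:ℚ)^x, 0; 0, (1/2)^x]
        * !![1, 0; -(y : ℚ), 1] * !![(1/2:ℚ)^z, 0; 0, (2:ℚ)^z]
      = !![2^x * 2 * (1/2)^z, 0;
           (2^x - (y:ℚ) * (1/2)^x * (1/2)) * (1/2)^z, (1/2)^x * (1/2) * 2^z] := by
    ext i j
    fin_cases i <;> fin_cases j <;>
      (simp [Matrix.mul_apply, Fin.sum_univ_two]; try ring)
  rw [hprod]
  constructor
  · intro h
    have h00 : (2:ℚ)^x * 2 * (1/2)^z = 1 := by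
      have := congrFun (congrFun h 0) 0; simpa using this
    have h10 : ((2:ℚ)^x - (y:ℚ) * (1/2)^x * (1/2)) * (1/2)^z = 0 := by
      have := congrFun (congrFun h 1) 0; simpa using this
    have hz : z = x + 1 := by
      have : (2:ℚ)^z * ((2:ℚ)^(x+1) * (1/2)^z) = (2:ℚ)^(x+1) * ((1/2)^z * 2^z) := by ring
      rw [half_pow z] at this
      rw [← pow_succ] at h00
      rw [h00] at this
      simpa using this
    refine ⟨?_, hz⟩
    have hzz : ((1:ℚ)/2)^z ≠ 0 := by positivity
    have hy : (2:ℚ)^x = (y:ℚ) * (1/2)^x * (1/2) :=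
      sub_eq_zero.mp ((mul_eq_zero.mp h10).resolve_right hzz)
    have key : ((y : ℚ)) = 2 ^ (2*x+1) := by
      have hmul : (2:ℚ)^x * (2^x * 2) = (y:ℚ) * (1/2)^x * (1/2) * (2^x * 2) := by
        rw [← hy]
      calc (y : ℚ) = (y:ℚ) * ((1/2)^x * 2^x) * ((1/2) * 2) := by
              rw [half_pow x]; norm_num
        _ = (y:ℚ) * (1/2)^x * (1/2) * (2^x * 2) := by ring
        _ = 2^x * (2^x * 2) := hmul.symm
        _ = 2 ^ (2*x+1) := by
              rw [show 2*x+1 = x+(x+1) from by omega, pow_add, pow_succ]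
    exact_mod_cast key
  · rintro ⟨hy, hz⟩
    subst hy hz
    have e1 : (2:ℚ)^x * 2 * (1/2)^(x+1) = 1 := by
      rw [← pow_succ, mul_comm]; exact half_pow (x+1)
    have e3 : ((1:ℚ)/2)^x * (1/2) * 2^(x+1) = 1 := by
      rw [← pow_succ]; exact half_pow (x+1)
    have e2 : ((2:ℚ)^x - ((2 ^ (2*x+1) : ℕ) : ℚ) * (1/2)^x * (1/2)) * (1/2)^(x+1) = 0 := by
      have : ((2 ^ (2*x+1) : ℕ) : ℚ) * (1/2)^x * (1/2) = 2^x := by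
        push_cast
        calc (2:ℚ) ^ (2*x+1) * (1/2)^x * (1/2)
            = 2^x * ((1/2)^(x+1) * 2^(x+1)) := by
              rw [show 2*x+1 = x+(x+1) from by omega, pow_add, pow_succ]; ring
          _ = 2^x := by rw [half_pow (x+1)]; ring
      rw [this, sub_self, zero_mul]
    rw [e1, e2, e3, Matrix.one_fin_two]
end

section
/- Let G be a group generated by a finite symmetric set X, and let W(G) ⊆ X* be the set of words evaluating to the identity of G. Let g_G(n) denote the number of elements of G of word length at most n, and let N_{W(G)}(n) denote the maximum number of pairwise n-dissimilar strings for W(G). Then N_{W(G)}(n) ≥ g_G(⌊n/2⌋). -/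
variable {G : Type*} [Group G]

/-- w is a word over the alphabet X. -/
def IsWordOver (X : Set G) (w : List G) : Prop := ∀ x ∈ w, x ∈ X

/-- The word problem language of G with respect to X: words over X whose
product is the identity. -/
def wordProblem (X : Set G) : Set (List G) := {w | IsWordOver X w ∧ w.prod = 1}

/-- Two words over X are n-dissimilar w.r.t. a language L: both have length
at most n and some extension v over X of admissible length separates them. -/
def Dissimilar (X : Set G) (L : Set (List G)) (n : ℕ) (w w' : List G) : Prop :=
  w.length ≤ n ∧ w'.length ≤ n ∧
    ∃ v : List G, IsWordOver X v ∧ (w ++ v).length ≤ n ∧ (w' ++ v).length ≤ n ∧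
      ((w ++ v) ∈ L ↔ (w' ++ v) ∉ L)

/-- The ball of radius n in G: elements representable by a word over X of
length at most n. -/
def ball (X : Set G) (n : ℕ) : Set G :=
  {g | ∃ w : List G, IsWordOver X w ∧ w.length ≤ n ∧ w.prod = g}

/-- N_{W(G)}(n) ≥ g_G(⌊n/2⌋): there is a family of at least g_G(⌊n/2⌋)
pairwise n-dissimilar words over X with respect to the word problem of G. -/
theorem dissimilar_ge_growth (X : Set G) (hX : Set.Finite X)
    (hsym : ∀ x ∈ X, x⁻¹ ∈ X) (hgen : Subgroup.closure X = ⊤) (n : ℕ) :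
    ∃ S : Finset (List G),
      (∀ w ∈ S, IsWordOver X w) ∧
      (∀ w ∈ S, ∀ w' ∈ S, w ≠ w' → Dissimilar X (wordProblem X) n w w') ∧
      (ball X (n / 2)).ncard ≤ S.card := by
  classical
  set m := n / 2 with hm
  by_cases hB : (ball X m).Finite
  · set f : G → List G := fun g =>
      if h : g ∈ ball X m then h.choose else [] with hf
    have hfspec : ∀ g ∈ ball X m,
        IsWordOver X (f g) ∧ (f g).length ≤ m ∧ (f g).prod = g := by
      intro g hg
      simp only [hf, dif_pos hg]
      exact hg.choose_spec
    refine ⟨hB.toFinset.image f, ?_, ?_, ?_⟩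
    · intro w hw
      rcases Finset.mem_image.mp hw with ⟨g, hg, rfl⟩
      exact (hfspec g (hB.mem_toFinset.mp hg)).1
    · intro w hw w' hw' hne
      rcases Finset.mem_image.mp hw with ⟨g, hg, rfl⟩
      rcases Finset.mem_image.mp hw' with ⟨g', hg', rfl⟩
      obtain ⟨hw1, hw2, hw3⟩ := hfspec g (hB.mem_toFinset.mp hg)
      obtain ⟨hw1', hw2', hw3'⟩ := hfspec g' (hB.mem_toFinset.mp hg')
      have hgg' : g ≠ g' := by rintro rfl; exact hne rfl
      have hmn : m ≤ n := Nat.div_le_self n 2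
      have hmm : m + m ≤ n := by omega
      refine ⟨hw2.trans hmn, hw2'.trans hmn,
        ((f g).map (·⁻¹)).reverse, ?_, ?_, ?_, ?_⟩
      · intro x hx
        rcases List.mem_map.mp (List.mem_reverse.mp hx) with ⟨y, hy, rfl⟩
        exact hsym y (hw1 y hy)
      · simpa using hmm.trans' (Nat.add_le_add hw2 hw2)
      · simpa using hmm.trans' (Nat.add_le_add hw2' hw2)
      · have hvprod : (((f g).map (·⁻¹)).reverse).prod = g⁻¹ := by
          rw [← List.prod_inv_reverse, hw3]
        have hin : (f g ++ ((f g).map (·⁻¹)).reverse) ∈ wordProblem X := by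
          refine ⟨?_, ?_⟩
          · intro x hx
            rcases List.mem_append.mp hx with h | h
            · exact hw1 x h
            · rcases List.mem_map.mp (List.mem_reverse.mp h) with ⟨y, hy, rfl⟩
              exact hsym y (hw1 y hy)
          · rw [List.prod_append, hvprod, hw3, mul_inv_cancel]
        have hout : (f g' ++ ((f g).map (·⁻¹)).reverse) ∉ wordProblem X := by
          intro hmem
          have h1 : g' * g⁻¹ = 1 := by
            have := hmem.2
            rwa [List.prod_append, hvprod, hw3'] at this
          exact hgg' (mul_inv_eq_one.mp h1).symm
        exact iff_of_true hin hout
    · have hinj : Set.InjOn f hB.toFinset := by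
        intro a ha b hb hab
        have ha' := (hfspec a (hB.mem_toFinset.mp ha)).2.2
        have hb' := (hfspec b (hB.mem_toFinset.mp hb)).2.2
        rw [← ha', ← hb', hab]
      rw [Finset.card_image_of_injOn hinj, ← Set.ncard_coe_finset, hB.coe_toFinset]
  · refine ⟨∅, by simp, by simp, ?_⟩
    simp [Set.Infinite.ncard hB]
end
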